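/- Let H : [0,1]^n → ℝ be continuous and submodular, E a set of pairs of indices, 𝒳 = { x ∈ [0,1]^n : x_i ≥ x_j for all (i,j) ∈ E }, and h the extension to tuples of probability measures. Then the infimum of h(μ) over tuples μ of probability measures on [0,1] satisfying μ_i ≽ μ_j (stochastic dominance) for all (i,j) ∈ E equals the infimum of H over 𝒳. Moreover, μ is a minimizer of the measure problem if and only if (F_{μ_1}^{-1}(t),…,F_{μ_n}^{-1}(t)) is a minimizer of H over 𝒳 for almost all t ∈ [0,1]. -/

import Mathlib

open MeasureTheory

/-- Inverse reversed cumulative distribution function of a measure on [0,1]. -/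
noncomputable def invCDF15 (μ : Measure ℝ) (t : ℝ) : ℝ :=
  sSup {x ∈ Set.Icc (0:ℝ) 1 | t ≤ (μ (Set.Icc x 1)).toReal}

/-- The extension of `H` to tuples of probability measures on [0,1]. -/
noncomputable def ext15 {n : ℕ} (H : (Fin n → ℝ) → ℝ) (μ : Fin n → Measure ℝ) : ℝ :=
  ∫ t in Set.Icc (0:ℝ) 1, H (fun i => invCDF15 (μ i) t)

/-!
Stochastic dominance `μ i ≽ μ j` orders the quantiles: `invCDF15 (μ j) t ≤ invCDF15 (μ i) t`.
So for every tuple `μ` respecting the constraints, the quantile vector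
`t ↦ (invCDF15 (μ i) t)ᵢ` stays in the feasible set `𝒳`. Hence `ext15 H μ`, the mean of `H`
along that vector, is at least `min_𝒳 H`, and the Dirac tuple at a minimiser attains this value.
As `H` is at least its minimum along the vector, the mean equals the minimum exactly when `H` is
minimal along it for almost every `t`.
-/

section Integration

variable {α : Type*} [MeasurableSpace α] {ν : Measure α}

theorem integral_eq_iff_ae_eq_of_ae_le [IsProbabilityMeasure ν] {f : α → ℝ} {c : ℝ}
    (hf : Integrable f ν) (hle : ∀ᵐ a ∂ν, c ≤ f a) :
    ∫ a, f a ∂ν = c ↔ ∀ᵐ a ∂ν, f a = c := by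
  have hnonneg : 0 ≤ᵐ[ν] fun a => f a - c := by
    filter_upwards [hle] with a ha using sub_nonneg.2 ha
  have hsub : ∫ a, (f a - c) ∂ν = ∫ a, f a ∂ν - c := by
    rw [integral_sub hf (integrable_const c), integral_const, probReal_univ, one_smul]
  rw [← sub_eq_zero, ← hsub,
    integral_eq_zero_iff_of_nonneg_ae hnonneg (hf.sub (integrable_const c))]
  simp only [Filter.EventuallyEq, Pi.zero_apply, sub_eq_zero]

theorem ContinuousOn.integrable_comp_of_isCompact [IsFiniteMeasure ν]
    {X : Type*} [TopologicalSpace X] [MeasurableSpace X] [OpensMeasurableSpace X]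
    {K : Set X} (hK : IsCompact K) {H : X → ℝ} (hH : ContinuousOn H K)
    {f : α → X} (hf : Measurable f) (hfK : ∀ a, f a ∈ K) :
    Integrable (fun a => H (f a)) ν := by
  obtain ⟨C, hC⟩ := hK.exists_bound_of_continuousOn hH
  have hmeas : Measurable fun a => H (f a) :=
    (continuousOn_iff_continuous_domRestrict.mp hH).measurable.comp (hf.subtype_mk (h := hfK))
  exact Integrable.of_bound hmeas.aestronglyMeasurable C
    (Filter.Eventually.of_forall fun a => hC _ (hfK a))

end Integration

instance isProbabilityMeasure_volume_restrict_Icc_zero_one :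
    IsProbabilityMeasure (volume.restrict (Set.Icc (0:ℝ) 1)) :=
  ⟨by simp⟩

theorem ae_restrict_Icc_zero_one_mem_Ioc :
    ∀ᵐ t ∂(volume.restrict (Set.Icc (0:ℝ) 1)), t ∈ Set.Ioc (0:ℝ) 1 := by
  rw [← Measure.restrict_congr_set Ioc_ae_eq_Icc]
  exact ae_restrict_mem measurableSet_Ioc

section Quantile

theorem invCDF15_mem_Icc (μ : Measure ℝ) (t : ℝ) : invCDF15 μ t ∈ Set.Icc (0:ℝ) 1 :=
  ⟨Real.sSup_nonneg fun _ hx => hx.1.1, Real.sSup_le (fun _ hx => hx.1.2) zero_le_one⟩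

theorem antitone_invCDF15 (μ : Measure ℝ) : Antitone (invCDF15 μ) := by
  intro a b hab
  rcases Set.eq_empty_or_nonempty {x ∈ Set.Icc (0:ℝ) 1 | b ≤ (μ (Set.Icc x 1)).toReal}
    with hempty | hne
  · rw [invCDF15, hempty, Real.sSup_empty]
    exact (invCDF15_mem_Icc μ a).1
  · exact csSup_le_csSup ⟨1, fun x hx => hx.1.2⟩ hne fun x hx => ⟨hx.1, hab.trans hx.2⟩

theorem invCDF15_le_of_dominated {μ ν : Measure ℝ} (hν : ν (Set.Icc (0:ℝ) 1) = 1) {t : ℝ}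
    (ht : t ≤ 1)
    (hdom : ∀ z ∈ Set.Icc (0:ℝ) 1, (ν (Set.Icc z 1)).toReal ≤ (μ (Set.Icc z 1)).toReal) :
    invCDF15 ν t ≤ invCDF15 μ t :=
  csSup_le_csSup ⟨1, fun _ hx => hx.1.2⟩ ⟨0, ⟨le_rfl, zero_le_one⟩, by simp [hν, ht]⟩
    fun x hx => ⟨hx.1, hx.2.trans (hdom x hx.1)⟩

theorem invCDF15_dirac {x t : ℝ} (hx : x ∈ Set.Icc (0:ℝ) 1) (ht : t ∈ Set.Ioc (0:ℝ) 1) :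
    invCDF15 (Measure.dirac x) t = x := by
  have hset : {y ∈ Set.Icc (0:ℝ) 1 | t ≤ (Measure.dirac x (Set.Icc y 1)).toReal} =
      Set.Icc 0 x := by
    ext y
    by_cases hy : y ≤ x
    · simpa [hy, hx.2, ht.2] using fun _ => hy.trans hx.2
    · simp [hy, not_le.2 ht.1]
  rw [invCDF15, hset, csSup_Icc hx.1]

end Quantile

section Feasible

variable {ι : Type*}

def orderedCube (E : Set (ι × ι)) : Set (ι → ℝ) :=
  {x | (∀ i, x i ∈ Set.Icc (0:ℝ) 1) ∧ ∀ p ∈ E, x p.2 ≤ x p.1}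

def dominanceOrdered (E : Set (ι × ι)) : Set (ι → Measure ℝ) :=
  {μ | (∀ i, IsProbabilityMeasure (μ i) ∧ μ i (Set.Icc (0:ℝ) 1) = 1) ∧
    ∀ p ∈ E, ∀ z ∈ Set.Icc (0:ℝ) 1,
      ((μ p.2) (Set.Icc z 1)).toReal ≤ ((μ p.1) (Set.Icc z 1)).toReal}

theorem orderedCube_subset_pi (E : Set (ι × ι)) :
    orderedCube E ⊆ Set.univ.pi fun _ => Set.Icc (0:ℝ) 1 :=
  fun _ hx => Set.mem_univ_pi.2 hx.1

theorem isCompact_orderedCube (E : Set (ι × ι)) : IsCompact (orderedCube E) := by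
  refine (isCompact_univ_pi fun _ => isCompact_Icc).of_isClosed_subset ?_ (orderedCube_subset_pi E)
  have hclosed : orderedCube E = (⋂ i, (fun x : ι → ℝ => x i) ⁻¹' Set.Icc 0 1) ∩
      ⋂ p ∈ E, {x : ι → ℝ | x p.2 ≤ x p.1} := by
    ext x
    simp [orderedCube]
  rw [hclosed]
  exact (isClosed_iInter fun i => isClosed_Icc.preimage (continuous_apply i)).inter
    (isClosed_biInter fun p _ => isClosed_le (continuous_apply p.2) (continuous_apply p.1))

theorem orderedCube_nonempty (E : Set (ι × ι)) : (orderedCube E).Nonempty :=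
  ⟨0, fun _ => ⟨le_rfl, zero_le_one⟩, fun _ _ => le_rfl⟩

theorem invCDF15_mem_orderedCube {E : Set (ι × ι)} {μ : ι → Measure ℝ}
    (hμ : μ ∈ dominanceOrdered E) {t : ℝ} (ht : t ≤ 1) :
    (fun i => invCDF15 (μ i) t) ∈ orderedCube E :=
  ⟨fun i => invCDF15_mem_Icc (μ i) t,
    fun p hp => invCDF15_le_of_dominated (hμ.1 p.2).2 ht (hμ.2 p hp)⟩

theorem dirac_mem_dominanceOrdered {E : Set (ι × ι)} {x : ι → ℝ}
    (hx : x ∈ orderedCube E) :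
    (fun i => Measure.dirac (x i)) ∈ dominanceOrdered E := by
  refine ⟨fun i => ⟨inferInstance, by simp [Set.indicator_of_mem (hx.1 i)]⟩,
    fun p hp z _ => ?_⟩
  by_cases hz : z ≤ x p.2
  · simp [hz.trans (hx.2 p hp), hz, (hx.1 p.1).2, (hx.1 p.2).2]
  · simp [hz]

end Feasible

section Extension

variable {n : ℕ} {H : (Fin n → ℝ) → ℝ}

theorem integrable_comp_invCDF15 (hH : ContinuousOn H (Set.univ.pi fun _ => Set.Icc (0:ℝ) 1))
    (μ : Fin n → Measure ℝ) :
    Integrable (fun t => H (fun i => invCDF15 (μ i) t)) (volume.restrict (Set.Icc (0:ℝ) 1)) :=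
  hH.integrable_comp_of_isCompact (isCompact_univ_pi fun _ => isCompact_Icc)
    (measurable_pi_lambda _ fun i => (antitone_invCDF15 (μ i)).measurable)
    fun t => Set.mem_univ_pi.2 fun i => invCDF15_mem_Icc (μ i) t

theorem ext15_dirac {x : Fin n → ℝ} (hx : ∀ i, x i ∈ Set.Icc (0:ℝ) 1) :
    ext15 H (fun i => Measure.dirac (x i)) = H x := by
  have hconst : ∀ᵐ t ∂(volume.restrict (Set.Icc (0:ℝ) 1)),
      H (fun i => invCDF15 (Measure.dirac (x i)) t) = H x := by
    filter_upwards [ae_restrict_Icc_zero_one_mem_Ioc] with t ht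
    simp only [invCDF15_dirac (hx _) ht]
  rw [ext15, integral_congr_ae hconst, integral_const, probReal_univ, one_smul]

theorem ae_invCDF15_mem_orderedCube {E : Set (Fin n × Fin n)} {μ : Fin n → Measure ℝ}
    (hμ : μ ∈ dominanceOrdered E) :
    ∀ᵐ t ∂(volume.restrict (Set.Icc (0:ℝ) 1)), (fun i => invCDF15 (μ i) t) ∈ orderedCube E := by
  filter_upwards [ae_restrict_mem measurableSet_Icc] with t ht
  exact invCDF15_mem_orderedCube hμ ht.2

theorem IsMinOn.ae_le_comp_invCDF15 {E : Set (Fin n × Fin n)} {x₀ : Fin n → ℝ}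
    (hmin : IsMinOn H (orderedCube E) x₀) {μ : Fin n → Measure ℝ} (hμ : μ ∈ dominanceOrdered E) :
    ∀ᵐ t ∂(volume.restrict (Set.Icc (0:ℝ) 1)), H x₀ ≤ H (fun i => invCDF15 (μ i) t) := by
  filter_upwards [ae_invCDF15_mem_orderedCube hμ] with t ht using isMinOn_iff.1 hmin _ ht

theorem isLeast_ext15_image_dominanceOrdered
    (hH : ContinuousOn H (Set.univ.pi fun _ => Set.Icc (0:ℝ) 1)) {E : Set (Fin n × Fin n)}
    {x₀ : Fin n → ℝ} (hx₀ : x₀ ∈ orderedCube E) (hmin : IsMinOn H (orderedCube E) x₀) :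
    IsLeast (ext15 H '' dominanceOrdered E) (H x₀) := by
  refine ⟨⟨_, dirac_mem_dominanceOrdered hx₀, ext15_dirac hx₀.1⟩, ?_⟩
  rintro _ ⟨μ, hμ, rfl⟩
  calc H x₀ = ∫ _ in Set.Icc (0:ℝ) 1, H x₀ := by simp
    _ ≤ ext15 H μ :=
      integral_mono_ae (integrable_const _) (integrable_comp_invCDF15 hH μ)
        (hmin.ae_le_comp_invCDF15 hμ)

end Extension

theorem stmt_15_general (n : ℕ) (H : (Fin n → ℝ) → ℝ)
    (hH : ContinuousOn H (Set.univ.pi fun _ : Fin n => Set.Icc (0:ℝ) 1))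
    (E : Set (Fin n × Fin n)) :
    -- the feasible sets
    (let 𝒳 : Set (Fin n → ℝ) :=
        {x | (∀ i, x i ∈ Set.Icc (0:ℝ) 1) ∧ ∀ p ∈ E, x p.2 ≤ x p.1};
     let ℳ : Set (Fin n → Measure ℝ) :=
        {μ | (∀ i, IsProbabilityMeasure (μ i) ∧ μ i (Set.Icc (0:ℝ) 1) = 1) ∧
          ∀ p ∈ E, ∀ z ∈ Set.Icc (0:ℝ) 1,
            ((μ p.2) (Set.Icc z 1)).toReal ≤ ((μ p.1) (Set.Icc z 1)).toReal};
     sInf (ext15 H '' ℳ) = sInf (H '' 𝒳) ∧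
     ∀ μ ∈ ℳ, (ext15 H μ = sInf (ext15 H '' ℳ) ↔
        ∀ᵐ t ∂(volume.restrict (Set.Icc (0:ℝ) 1)),
          (fun i => invCDF15 (μ i) t) ∈ 𝒳 ∧
            H (fun i => invCDF15 (μ i) t) = sInf (H '' 𝒳))) := by
  change sInf (ext15 H '' dominanceOrdered E) = sInf (H '' orderedCube E) ∧
    ∀ μ ∈ dominanceOrdered E, (ext15 H μ = sInf (ext15 H '' dominanceOrdered E) ↔
      ∀ᵐ t ∂(volume.restrict (Set.Icc (0:ℝ) 1)),
        (fun i => invCDF15 (μ i) t) ∈ orderedCube E ∧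
          H (fun i => invCDF15 (μ i) t) = sInf (H '' orderedCube E))
  obtain ⟨x₀, hx₀, hmin⟩ :=
    (isCompact_orderedCube E).exists_isMinOn (orderedCube_nonempty E)
      (hH.mono (orderedCube_subset_pi E))
  have hX : sInf (H '' orderedCube E) = H x₀ :=
    IsLeast.csInf_eq ⟨⟨x₀, hx₀, rfl⟩, Set.forall_mem_image.2 (isMinOn_iff.1 hmin)⟩
  have hM : sInf (ext15 H '' dominanceOrdered E) = H x₀ :=
    (isLeast_ext15_image_dominanceOrdered hH hx₀ hmin).csInf_eq
  refine ⟨hM.trans hX.symm, fun μ hμ => ?_⟩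
  rw [hM, hX, ext15, integral_eq_iff_ae_eq_of_ae_le (integrable_comp_invCDF15 hH μ)
    (hmin.ae_le_comp_invCDF15 hμ)]
  exact ⟨(ae_invCDF15_mem_orderedCube hμ).and, fun h => h.mono fun _ ht => ht.2⟩

theorem stmt_15 (n : ℕ) (H : (Fin n → ℝ) → ℝ)
    (hH : ContinuousOn H (Set.univ.pi fun _ : Fin n => Set.Icc (0:ℝ) 1))
    (hsub : ∀ x y : Fin n → ℝ, (∀ m, x m ∈ Set.Icc (0:ℝ) 1) → (∀ m, y m ∈ Set.Icc (0:ℝ) 1) →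
      H x + H y ≥ H (fun m => min (x m) (y m)) + H (fun m => max (x m) (y m)))
    (E : Set (Fin n × Fin n)) :
    -- the feasible sets
    (let 𝒳 : Set (Fin n → ℝ) :=
        {x | (∀ i, x i ∈ Set.Icc (0:ℝ) 1) ∧ ∀ p ∈ E, x p.2 ≤ x p.1};
     let ℳ : Set (Fin n → Measure ℝ) :=
        {μ | (∀ i, IsProbabilityMeasure (μ i) ∧ μ i (Set.Icc (0:ℝ) 1) = 1) ∧
          ∀ p ∈ E, ∀ z ∈ Set.Icc (0:ℝ) 1,
            ((μ p.2) (Set.Icc z 1)).toReal ≤ ((μ p.1) (Set.Icc z 1)).toReal};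
     sInf (ext15 H '' ℳ) = sInf (H '' 𝒳) ∧
     ∀ μ ∈ ℳ, (ext15 H μ = sInf (ext15 H '' ℳ) ↔
        ∀ᵐ t ∂(volume.restrict (Set.Icc (0:ℝ) 1)),
          (fun i => invCDF15 (μ i) t) ∈ 𝒳 ∧
            H (fun i => invCDF15 (μ i) t) = sInf (H '' 𝒳))) :=
  stmt_15_general n H hH E
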